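/- arXiv:2405.03926 — 2 statements merged into one kernel-verified Lean document; each statement's English description precedes it below -/
import Mathlib

section
/- Suppose for each player i there exists λ_i ∈ R^{m_i} with λ_i ≥ 0, ∇_{x_i} f_i(x) = A_i^T λ_i, complementarity λ_i ⊥ (A_i x_i − b_i(x_{−i})), and A_i x_i − b_i(x_{−i}) ≥ 0. Then for each i there exists a subset J_i ⊆ {1,...,m_i} with |J_i| = rank(A_i) and rank(A_{i,J_i}) = rank(A_i), and a vector λ_{i,J_i} ≥ 0 supported on J_i, such that ∇_{x_i} f_i(x) = A_{i,J_i}^T λ_{i,J_i} and λ_{i,J_i} ⊥ (A_{i,J_i} x_i − b_{i,J_i}(x_{−i})). -/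
/-!
If the rows of `A_i` carrying positive multipliers are linearly dependent, moving the
multipliers along a dependence with a positive coefficient keeps them nonnegative and the
combination unchanged until one of them vanishes (Carathéodory's theorem for cones). So the
multipliers can be chosen on linearly independent rows, with support inside the original one,
which preserves complementarity. Extending these rows to a basis of the row space gives `J_i`:
`|J_i| = rank A_{i,J_i} = rank A_i`.
-/

open Matrix Function Set Submodule

section ConicCaratheodory

variable {K ι V : Type*} [Field K] [LinearOrder K] [IsStrictOrderedRing K]

theorem exists_nonneg_sub_smul_support_ssubset [Finite ι] {d g : ι → K} (hd : 0 ≤ d)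
    (hg : support g ⊆ support d) (hpos : ∃ i, 0 < g i) :
    ∃ t : K, 0 ≤ d - t • g ∧ support (d - t • g) ⊂ support d := by
  classical
  have := Fintype.ofFinite ι
  obtain ⟨i₀, hi₀, hmin⟩ := Finset.exists_min_image
    (Finset.univ.filter (fun i => 0 < g i)) (fun i => d i / g i)
    (let ⟨i, hi⟩ := hpos; ⟨i, by simpa using hi⟩)
  simp only [Finset.mem_filter, Finset.mem_univ, true_and] at hi₀ hmin
  set t := d i₀ / g i₀
  have ht : 0 ≤ t := div_nonneg (hd i₀) hi₀.le
  have hsupp : support (d - t • g) ⊆ support d := fun i hi hdi => by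
    have hgi : g i = 0 := by_contra fun h => h (notMem_support.mp fun h' => hg h' hdi)
    simp [hdi, hgi] at hi
  refine ⟨t, fun i => ?_, ssubset_of_subset_of_ne hsupp fun h => ?_⟩
  · simp only [Pi.zero_apply, Pi.sub_apply, Pi.smul_apply, smul_eq_mul, sub_nonneg]
    rcases lt_or_ge 0 (g i) with hgi | hgi
    · exact (le_div_iff₀ hgi).mp (hmin i hgi)
    · exact (mul_nonpos_of_nonneg_of_nonpos ht hgi).trans (hd i)
  · have hi₀d : i₀ ∈ support d := hg hi₀.ne'
    rw [← h] at hi₀d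
    exact hi₀d (by simp [t, div_mul_cancel₀ _ hi₀.ne'])

variable [AddCommGroup V] [Module K V]

theorem exists_support_subset_sum_smul_eq_zero_of_not_linearIndepOn [Fintype ι] {v : ι → V}
    {s : Set ι} (h : ¬LinearIndepOn K v s) :
    ∃ g : ι → K, support g ⊆ s ∧ ∑ i, g i • v i = 0 ∧ ∃ i, 0 < g i := by
  obtain ⟨l, hls, hl0, hl⟩ : ∃ l ∈ Finsupp.supported K K s,
      Finsupp.linearCombination K v l = 0 ∧ l ≠ 0 := by
    simpa [linearIndepOn_iff] using h
  have hsum : ∑ i, l i • v i = 0 := by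
    rwa [Finsupp.linearCombination_apply, Finsupp.sum_fintype _ _ (by simp)] at hl0
  have hsupp : support l ⊆ s := by
    rwa [Finsupp.fun_support_eq, ← Finsupp.mem_supported K]
  obtain ⟨i, hi⟩ := DFunLike.ne_iff.mp hl
  rcases lt_or_gt_of_ne hi with hneg | hpos
  · exact ⟨-l, by simpa using hsupp, by simp [hsum], i, by simpa using hneg⟩
  · exact ⟨l, hsupp, hsum, i, hpos⟩

theorem exists_nonneg_support_subset_linearIndepOn [Fintype ι] (v : ι → V) {c : ι → K}
    (hc : 0 ≤ c) :
    ∃ d : ι → K, 0 ≤ d ∧ support d ⊆ support c ∧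
      ∑ i, d i • v i = ∑ i, c i • v i ∧ LinearIndepOn K v (support d) := by
  induction hn : (support c).ncard using Nat.strong_induction_on generalizing c with
  | _ n ih =>
  by_cases hind : LinearIndepOn K v (support c)
  · exact ⟨c, hc, subset_rfl, rfl, hind⟩
  obtain ⟨g, hgc, hgv, hpos⟩ := exists_support_subset_sum_smul_eq_zero_of_not_linearIndepOn hind
  obtain ⟨t, hnonneg, hssub⟩ := exists_nonneg_sub_smul_support_ssubset hc hgc hpos
  obtain ⟨d, hd, hdsupp, hdsum, hdind⟩ :=
    ih _ (hn ▸ ncard_lt_ncard hssub (toFinite _)) hnonneg rfl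
  refine ⟨d, hd, hdsupp.trans hssub.subset, ?_, hdind⟩
  simp [hdsum, sub_smul, Finset.sum_sub_distrib, mul_smul, ← Finset.smul_sum, hgv]

end ConicCaratheodory

namespace Matrix

variable {K m n : Type*} [Field K] [Fintype n]

theorem rank_submatrix_row_eq_rank [Finite m] {A : Matrix m n K} {J : Finset m}
    (hJ : range A.row ⊆ span K (A.row '' J)) :
    (A.submatrix (Subtype.val : {j // j ∈ J} → m) id).rank = A.rank := by
  have hrows : range (A.submatrix (Subtype.val : {j // j ∈ J} → m) id).row = A.row '' J := by
    rw [image_eq_range]; rfl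
  rw [rank_eq_finrank_span_row, rank_eq_finrank_span_row, hrows,
    le_antisymm (span_mono (image_subset_range _ _)) (span_le.mpr hJ)]

theorem rank_submatrix_row_eq_card {A : Matrix m n K} {J : Finset m}
    (hJ : LinearIndepOn K A.row J) :
    (A.submatrix (Subtype.val : {j // j ∈ J} → m) id).rank = J.card :=
  (LinearIndependent.rank_matrix (M := A.submatrix Subtype.val id) hJ).trans (Fintype.card_coe J)

theorem exists_finset_superset_card_eq_rank_submatrix_eq_rank [Finite m] (A : Matrix m n K)
    {S : Set m} (hS : LinearIndepOn K A.row S) :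
    ∃ J : Finset m, S ⊆ J ∧ J.card = A.rank ∧
      (A.submatrix (Subtype.val : {j // j ∈ J} → m) id).rank = A.rank := by
  classical
  cases nonempty_fintype m
  obtain ⟨J, -, hSJ, hspan, hJ⟩ := exists_linearIndepOn_extension hS (subset_univ S)
  rw [image_univ] at hspan
  rw [← coe_toFinset J] at hSJ hspan hJ
  have hrank := rank_submatrix_row_eq_rank hspan
  refine ⟨J.toFinset, hSJ, ?_, hrank⟩
  rw [← rank_submatrix_row_eq_card hJ, hrank]

end Matrix

theorem KKT_decomposition_general {N : ℕ} (n m : Fin N → ℕ)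
    (A : ∀ i, Matrix (Fin (m i)) (Fin (n i)) ℝ)
    (x : ∀ i, Fin (n i) → ℝ) (b : ∀ i, Fin (m i) → ℝ)
    (grad : ∀ i, Fin (n i) → ℝ)
    (hKKT : ∀ i, ∃ lam : Fin (m i) → ℝ, (∀ j, 0 ≤ lam j) ∧
      grad i = (A i)ᵀ.mulVec lam ∧
      ∀ j, lam j * (((A i).mulVec (x i) - b i) j) = 0) :
    ∀ i, ∃ J : Finset (Fin (m i)), J.card = (A i).rank ∧
      ((A i).submatrix (Subtype.val : {j // j ∈ J} → Fin (m i)) id).rank = (A i).rank ∧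
      ∃ mu : Fin (m i) → ℝ, (∀ j, 0 ≤ mu j) ∧ (∀ j ∉ J, mu j = 0) ∧
        grad i = (A i)ᵀ.mulVec mu ∧
        ∀ j, mu j * (((A i).mulVec (x i) - b i) j) = 0 := by
  intro i
  obtain ⟨lam, hlam, hgrad, hcompl⟩ := hKKT i
  obtain ⟨mu, hmu, hsupp, hsum, hind⟩ :=
    exists_nonneg_support_subset_linearIndepOn (A i).row (c := lam) hlam
  obtain ⟨J, hmuJ, hcard, hrank⟩ :=
    (A i).exists_finset_superset_card_eq_rank_submatrix_eq_rank hind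
  refine ⟨J, hcard, hrank, mu, hmu, fun j hj => notMem_support.mp fun h => hj (hmuJ h), ?_,
    fun j => ?_⟩
  · rw [hgrad, mulVec_transpose, mulVec_transpose, vecMul_eq_sum, vecMul_eq_sum]
    exact hsum.symm
  · rcases mul_eq_zero.mp (hcompl j) with h | h
    · rw [notMem_support.mp fun hj => hsupp hj h, zero_mul]
    · rw [h, mul_zero]

/-- If every player's KKT system holds at `x`, then for each player `i` there is a
label set `J_i` with `|J_i| = rank A_i`, `rank A_{i,J_i} = rank A_i`, and a
nonnegative multiplier vector supported on `J_i` satisfying the simplified KKT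
system (Theorem 3.2 of the paper). -/
theorem KKT_decomposition {N : ℕ} (n m : Fin N → ℕ)
    (A : ∀ i, Matrix (Fin (m i)) (Fin (n i)) ℝ)
    (x : ∀ i, Fin (n i) → ℝ) (b : ∀ i, Fin (m i) → ℝ)
    (grad : ∀ i, Fin (n i) → ℝ)
    (hfeas : ∀ i, ∀ j, 0 ≤ ((A i).mulVec (x i) - b i) j)
    (hKKT : ∀ i, ∃ lam : Fin (m i) → ℝ, (∀ j, 0 ≤ lam j) ∧
      grad i = (A i)ᵀ.mulVec lam ∧
      ∀ j, lam j * (((A i).mulVec (x i) - b i) j) = 0) :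
    ∀ i, ∃ J : Finset (Fin (m i)), J.card = (A i).rank ∧
      ((A i).submatrix (Subtype.val : {j // j ∈ J} → Fin (m i)) id).rank = (A i).rank ∧
      ∃ mu : Fin (m i) → ℝ, (∀ j, 0 ≤ mu j) ∧ (∀ j ∉ J, mu j = 0) ∧
        grad i = (A i)ᵀ.mulVec mu ∧
        ∀ j, mu j * (((A i).mulVec (x i) - b i) j) = 0 :=
  KKT_decomposition_general n m A x b grad hKKT
end

section
/- Consider the two-player game where player 1 minimizes ‖x_1‖² over {x_1 ∈ R² : −x_{1,1} − x_{1,2} ≥ −2, x_{1,1} ≥ 0, x_{1,2} ≥ 0, 6x_{1,1} + x_{1,2} ≥ 1 + x_{2,1} + x_{2,2}} and player 2 minimizes ‖x_2‖² over {x_2 ∈ R² : −x_{2,1} + x_{2,2} ≥ −2x_{1,1} + 2, x_{2,1} ≥ 0, x_{2,2} ≥ 0, −x_{2,1} ≥ x_{1,1} − x_{1,2} − 2}. Then the point x_1* = (18/49, 3/49), x_2* = (0, 62/49) is a generalized Nash equilibrium: x_1* minimizes ‖x_1‖² over player 1's feasible set given x_2*, and x_2* minimizes ‖x_2‖² over player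 2's feasible set given x_1*. -/
/-- The point `x₁* = (18/49, 3/49)`, `x₂* = (0, 62/49)` is a generalized Nash
equilibrium of the 2-player game in Example 3.3: each player's strategy is
feasible and globally minimizes that player's objective `‖x_i‖²` over the
player's own feasible set, given the other's strategy. -/
theorem example_GNE :
    -- feasibility of x₁* given x₂*
    (-(18/49 : ℝ) - 3/49 ≥ -2 ∧ (18/49 : ℝ) ≥ 0 ∧ (3/49 : ℝ) ≥ 0 ∧
      6 * (18/49 : ℝ) + 3/49 ≥ 1 + 0 + 62/49) ∧
    -- optimality of x₁* for player 1
    (∀ y1 y2 : ℝ, -y1 - y2 ≥ -2 → y1 ≥ 0 → y2 ≥ 0 →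
      6 * y1 + y2 ≥ 1 + 0 + 62/49 →
      (18/49 : ℝ)^2 + (3/49 : ℝ)^2 ≤ y1^2 + y2^2) ∧
    -- feasibility of x₂* given x₁*
    (-(0 : ℝ) + 62/49 ≥ -2 * (18/49) + 2 ∧ (0 : ℝ) ≥ 0 ∧ (62/49 : ℝ) ≥ 0 ∧
      -(0 : ℝ) ≥ 18/49 - 3/49 - 2) ∧
    -- optimality of x₂* for player 2
    (∀ z1 z2 : ℝ, -z1 + z2 ≥ -2 * (18/49) + 2 → z1 ≥ 0 → z2 ≥ 0 →
      -z1 ≥ 18/49 - 3/49 - 2 →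
      (0 : ℝ)^2 + (62/49 : ℝ)^2 ≤ z1^2 + z2^2) := by
  refine ⟨by norm_num, ?_, by norm_num, ?_⟩
  · intro y1 y2 _ _ _ h4
    nlinarith [sq_nonneg (6*y2 - y1), sq_nonneg (6*y1 + y2 - 111/49)]
  · intro z1 z2 h1 h2 _ _
    nlinarith [sq_nonneg z1, sq_nonneg (z2 - 62/49)]
end
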